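/- Let Ω = (a,b) ⊆ ℝ be a bounded open interval, Q = Ω×(0,T), H ∈ W^{1,∞}(ℝ) with H(0)=0, k ∈ ℝ, and let u ∈ L¹(Q) satisfy, for every ζ(x,t) = α(x)β(t) with α ∈ C_c¹(Ω), β ∈ C_c¹(0,T), α,β ≥ 0, the inequality ∬_Q {[u−k]_± α(x)β'(t) + sgn_±(u−k)[H(u)−H(k)] α'(x)β(t)} dx dt ≥ 0 (for a fixed choice of sign). Then for every β ∈ C_c¹(0,T) with β ≥ 0, the essential limits as x → a⁺ and as x → b⁻ of the function x ↦ ∫₀^T sgn_±(u(x,t)−k)[H(u(x,t))−H(k)] β(t) dt exist and are finite. -/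

import Mathlib

open MeasureTheory Filter Set
open scoped Topology ENNReal NNReal BigOperators

noncomputable section

/-- Integral of a function against a signed measure. -/
def sIntg {α : Type*} [MeasurableSpace α] (s : SignedMeasure α) (f : α → ℝ) : ℝ :=
  (∫ x, f x ∂s.toJordanDecomposition.posPart) -
    ∫ x, f x ∂s.toJordanDecomposition.negPart

/-- `sgn₊`. -/
def sgnp (v : ℝ) : ℝ := if 0 < v then 1 else 0

/-- `sgn₋`. -/
def sgnm (v : ℝ) : ℝ := if v < 0 then -1 else 0

/-- `sgn = sgn₊ + sgn₋`. -/
def sgn' (v : ℝ) : ℝ := sgnp v + sgnm v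

/-- positive part `[v]₊`. -/
def pp (v : ℝ) : ℝ := max v 0

/-- negative part `[v]₋`. -/
def np (v : ℝ) : ℝ := max (-v) 0

/-- `H ∈ W^{1,∞}(ℝ)`: bounded and Lipschitz. -/
def W1inf (H : ℝ → ℝ) : Prop :=
  (∃ C : ℝ, ∀ v, |H v| ≤ C) ∧ ∃ L : ℝ≥0, LipschitzWith L H

/-- Test functions `ζ ∈ C¹([0,T]; C_c¹(Ω))` with `ζ(·,T) = 0`. -/
structure IsTestCL (Ω : Set ℝ) (T : ℝ) (ζ : ℝ → ℝ → ℝ) : Prop where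
  smooth : ContDiff ℝ 1 (fun q : ℝ × ℝ => ζ q.1 q.2)
  supp : ∃ K : Set ℝ, IsCompact K ∧ K ⊆ Ω ∧
    ∀ t, Function.support (fun x => ζ x t) ⊆ K
  final : ∀ x, ζ x T = 0

/-- Essential limit of `f` at `x0` along the set `S` (avoiding a fixed null set). -/
def essLimWithin (f : ℝ → ℝ) (S : Set ℝ) (x0 l : ℝ) : Prop :=
  ∃ E : Set ℝ, volume E = 0 ∧
    ∀ x : ℕ → ℝ, (∀ n, x n ∈ S \ E) → Tendsto x atTop (𝓝 x0) →
      Tendsto (fun n => f (x n)) atTop (𝓝 l)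

/-- Nonnegative `C¹` test functions compactly supported in `(0,T)`. -/
def IsTestT (T : ℝ) (β : ℝ → ℝ) : Prop :=
  ContDiff ℝ 1 β ∧ HasCompactSupport β ∧ tsupport β ⊆ Ioo 0 T ∧ ∀ t, 0 ≤ β t

/-- The boundary-trace integrand `ξ ↦ ∫₀ᵀ sg(u(ξ,t) − k)[H(u(ξ,t)) − H(k)] β(t) dt`. -/
def BTrace (T : ℝ) (H sg : ℝ → ℝ) (u : ℝ → ℝ → ℝ) (k : ℝ) (β : ℝ → ℝ) : ℝ → ℝ :=
  fun ξ => ∫ t in Ioo (0:ℝ) T, sg (u ξ t - k) * (H (u ξ t) - H k) * β t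

/-- Interior entropy inequality (E+) on the space-time region `Q`. -/
def EntropyIneqP (Q : Set (ℝ × ℝ)) (H : ℝ → ℝ) (u : ℝ → ℝ → ℝ) : Prop :=
  ∀ k : ℝ, ∀ ζ : ℝ × ℝ → ℝ, ContDiff ℝ 1 ζ → HasCompactSupport ζ →
    tsupport ζ ⊆ Q → (∀ q, 0 ≤ ζ q) →
    0 ≤ ∫ q in Q, (pp (u q.1 q.2 - k) * fderiv ℝ ζ q (0, 1)
        + sgnp (u q.1 q.2 - k) * (H (u q.1 q.2) - H k) * fderiv ℝ ζ q (1, 0))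

/-- Interior entropy inequality (E−) on the space-time region `Q`. -/
def EntropyIneqM (Q : Set (ℝ × ℝ)) (H : ℝ → ℝ) (u : ℝ → ℝ → ℝ) : Prop :=
  ∀ k : ℝ, ∀ ζ : ℝ × ℝ → ℝ, ContDiff ℝ 1 ζ → HasCompactSupport ζ →
    tsupport ζ ⊆ Q → (∀ q, 0 ≤ ζ q) →
    0 ≤ ∫ q in Q, (np (u q.1 q.2 - k) * fderiv ℝ ζ q (0, 1)
        + sgnm (u q.1 q.2 - k) * (H (u q.1 q.2) - H k) * fderiv ℝ ζ q (1, 0))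

/-- `u ∈ C([0,T]; L¹(Ω))` (with `u = u(x,t)`). -/
def ContL1 (Ω : Set ℝ) (T : ℝ) (u : ℝ → ℝ → ℝ) : Prop :=
  (∀ t ∈ Icc (0:ℝ) T, IntegrableOn (fun x => u x t) Ω volume) ∧
  ∀ t₀ ∈ Icc (0:ℝ) T,
    Tendsto (fun t => ∫ x in Ω, |u x t - u x t₀|) (𝓝[Icc (0:ℝ) T] t₀) (𝓝 0)

/-- `u ∈ C([0,T]; L¹_loc(Ω))` (with `u = u(x,t)`). -/
def ContL1loc (Ω : Set ℝ) (T : ℝ) (u : ℝ → ℝ → ℝ) : Prop :=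
  ∀ K : Set ℝ, IsCompact K → K ⊆ Ω →
    (∀ t ∈ Icc (0:ℝ) T, IntegrableOn (fun x => u x t) K volume) ∧
    ∀ t₀ ∈ Icc (0:ℝ) T,
      Tendsto (fun t => ∫ x in K, |u x t - u x t₀|) (𝓝[Icc (0:ℝ) T] t₀) (𝓝 0)

/-- Initial condition (I+): `∫_I [u(·,t) − u₀]₊ → 0` as `t → 0⁺`, on every interval `I ⊆ Ω`. -/
def InitP (Ω : Set ℝ) (u0 : ℝ → ℝ) (u : ℝ → ℝ → ℝ) : Prop :=
  ∀ c d : ℝ, Ioo c d ⊆ Ω →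
    Tendsto (fun t => ∫ x in Ioo c d, pp (u x t - u0 x)) (𝓝[>] (0:ℝ)) (𝓝 0)

/-- Initial condition (I−): `∫_I [u(·,t) − u₀]₋ → 0` as `t → 0⁺`, on every interval `I ⊆ Ω`. -/
def InitM (Ω : Set ℝ) (u0 : ℝ → ℝ) (u : ℝ → ℝ → ℝ) : Prop :=
  ∀ c d : ℝ, Ioo c d ⊆ Ω →
    Tendsto (fun t => ∫ x in Ioo c d, np (u x t - u0 x)) (𝓝[>] (0:ℝ)) (𝓝 0)

/-!
Let `F` be the boundary flux `x ↦ ∫ sg(u - k) [H(u) - H(k)] β dt` and `G x = ∫ P(u - k) β' dt`.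
By Fubini, the entropy inequality for `ζ = α(x) β(t)` says that `F' ≤ G` in the sense of
distributions on `(a, b)`. Testing it against smooth approximations of the indicator of `(x, y]`
and sharpening them at Lebesgue points of `F` shows that `F - ∫ₐ^· G` is nonincreasing off a null
set. Since `F` is bounded (because `H` is) and `∫ₐ^· G` is continuous up to the endpoints, `F` has
one-sided essential limits at `a` and `b`.
-/

open Real (smoothTransition)

namespace Real.smoothTransition

lemma deriv_eq_zero_of_nonpos {x : ℝ} (hx : x ≤ 0) : deriv smoothTransition x = 0 :=
  IsLocalMin.deriv_eq_zero <| Eventually.of_forall fun y => by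
    simpa only [zero_of_nonpos hx] using nonneg y

lemma deriv_eq_zero_of_one_le {x : ℝ} (hx : 1 ≤ x) : deriv smoothTransition x = 0 :=
  IsLocalMax.deriv_eq_zero <| Eventually.of_forall fun y => by
    simpa only [one_of_one_le hx] using le_one y

lemma continuous_deriv : Continuous (deriv smoothTransition) :=
  (smoothTransition.contDiff (n := 1)).continuous_deriv le_rfl

lemma hasCompactSupport_deriv : HasCompactSupport (deriv smoothTransition) :=
  HasCompactSupport.intro (isCompact_Icc (a := 0) (b := 1)) fun x hx => by
    rcases not_and_or.1 hx with hx | hx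
    · exact deriv_eq_zero_of_nonpos (not_le.1 hx).le
    · exact deriv_eq_zero_of_one_le (not_le.1 hx).le

end Real.smoothTransition

def ramp (h z s : ℝ) : ℝ := smoothTransition ((s - z) / h)

def rampKernel (h z s : ℝ) : ℝ := h⁻¹ * deriv smoothTransition ((s - z) / h)

section Ramp

variable {h z s : ℝ}

lemma ramp_eq_zero (hh : 0 < h) (hs : s ≤ z) : ramp h z s = 0 :=
  smoothTransition.zero_of_nonpos (div_nonpos_of_nonpos_of_nonneg (by linarith) hh.le)

lemma ramp_eq_one (hh : 0 < h) (hs : z + h ≤ s) : ramp h z s = 1 :=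
  smoothTransition.one_of_one_le ((one_le_div hh).2 (by linarith))

lemma contDiff_ramp : ContDiff ℝ 1 (ramp h z) := by
  unfold ramp
  fun_prop

lemma hasDerivAt_ramp (s : ℝ) : HasDerivAt (ramp h z) (rampKernel h z s) s := by
  have hin : HasDerivAt (fun s : ℝ => (s - z) / h) h⁻¹ s := by
    simpa [div_eq_mul_inv] using ((hasDerivAt_id s).sub_const z).div_const h
  rw [rampKernel, mul_comm]
  exact ((smoothTransition.contDiff (n := 1)).differentiable one_ne_zero _).hasDerivAt.comp s hin

lemma tendsto_ramp (z s : ℝ) :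
    Tendsto (fun h => ramp h z s) (𝓝[>] 0) (𝓝 ((Ioi z).indicator 1 s)) := by
  by_cases hzs : z < s
  · rw [indicator_of_mem (mem_Ioi.2 hzs)]
    refine tendsto_const_nhds.congr' ?_
    filter_upwards [Ioo_mem_nhdsGT (sub_pos.2 hzs)] with h hh
    exact (ramp_eq_one hh.1 (by linarith [hh.2])).symm
  · rw [indicator_of_notMem (mt mem_Ioi.1 hzs)]
    refine tendsto_const_nhds.congr' ?_
    filter_upwards [self_mem_nhdsWithin] with h (hh : 0 < h)
    exact (ramp_eq_zero hh (not_lt.1 hzs)).symm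

lemma continuous_rampKernel (h z : ℝ) : Continuous (rampKernel h z) :=
  continuous_const.mul (smoothTransition.continuous_deriv.comp (by fun_prop))

lemma rampKernel_eq_zero (hh : 0 < h) (hs : s ≤ z ∨ z + h ≤ s) : rampKernel h z s = 0 := by
  rcases hs with hs | hs
  · rw [rampKernel, smoothTransition.deriv_eq_zero_of_nonpos
      (div_nonpos_of_nonpos_of_nonneg (by linarith) hh.le), mul_zero]
  · rw [rampKernel, smoothTransition.deriv_eq_zero_of_one_le
      ((one_le_div hh).2 (by linarith)), mul_zero]

lemma support_rampKernel_subset (hh : 0 < h) (z : ℝ) :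
    Function.support (rampKernel h z) ⊆ Icc z (z + h) := fun s hs => by
  by_contra hs'
  rcases not_and_or.1 hs' with h1 | h1
  · exact hs (rampKernel_eq_zero hh (Or.inl (not_le.1 h1).le))
  · exact hs (rampKernel_eq_zero hh (Or.inr (not_le.1 h1).le))

end Ramp

lemma exists_abs_rampKernel_le : ∃ M, ∀ h, 0 < h → ∀ z s, |rampKernel h z s| ≤ M / h := by
  obtain ⟨M, hM⟩ := smoothTransition.hasCompactSupport_deriv.exists_bound_of_continuous
    smoothTransition.continuous_deriv
  refine ⟨M, fun h hh z s => ?_⟩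
  rw [rampKernel, abs_mul, abs_inv, abs_of_pos hh, inv_mul_eq_div]
  exact div_le_div_of_nonneg_right (hM _) hh.le

lemma integral_rampKernel {h : ℝ} (hh : 0 < h) (z : ℝ) : ∫ s, rampKernel h z s = 1 := by
  rw [← setIntegral_eq_integral_of_forall_compl_eq_zero fun s hs =>
      Function.notMem_support.1 fun h' => hs (support_rampKernel_subset hh z h'),
    integral_Icc_eq_integral_Ioc, ← intervalIntegral.integral_of_le (by linarith),
    intervalIntegral.integral_eq_sub_of_hasDerivAt
      (fun s _ => hasDerivAt_ramp s)
      ((continuous_rampKernel h z).intervalIntegrable _ _)]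
  simp [ramp, div_self hh.ne']

lemma ae_tendsto_integral_rampKernel_mul {f : ℝ → ℝ} (hf : LocallyIntegrable f) :
    ∀ᵐ z, Tendsto (fun h => ∫ s, rampKernel h z s * f s) (𝓝[>] 0) (𝓝 (f z)) := by
  obtain ⟨M, hM⟩ := exists_abs_rampKernel_le
  filter_upwards [IsUnifLocDoublingMeasure.ae_tendsto_average_norm_sub volume hf 1] with z hz
  have havg : Tendsto (fun h => ⨍ y in Metric.closedBall z h, ‖f y - f z‖) (𝓝[>] 0) (𝓝 0) :=
    hz (fun _ => z) id tendsto_id <| eventually_mem_nhdsWithin.mono fun h hh =>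
      Metric.mem_closedBall_self (by simpa using le_of_lt hh)
  refine (tendsto_integral_smul_of_tendsto_average_norm_sub (g := fun h => rampKernel h z)
    (2 * M) havg
    (Eventually.of_forall fun _ => hf.integrableOn_isCompact (isCompact_closedBall _ _))
    (tendsto_const_nhds.congr' ?_) ?_ ?_).congr fun h => by simp only [smul_eq_mul]
  · filter_upwards [self_mem_nhdsWithin] with h hh using (integral_rampKernel hh z).symm
  · filter_upwards [self_mem_nhdsWithin] with h (hh : 0 < h)
    refine (support_rampKernel_subset hh z).trans fun s hs => ?_
    rw [Metric.mem_closedBall, Real.dist_eq, abs_of_nonneg (by linarith [hs.1])]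
    linarith [hs.2]
  · filter_upwards [self_mem_nhdsWithin] with h (hh : 0 < h) s
    rw [Real.volume_real_closedBall hh.le]
    convert hM h hh z s using 1
    field_simp

def plateau (h x y s : ℝ) : ℝ := ramp h x s - ramp h y s

section Plateau

variable {h x y : ℝ}

lemma contDiff_plateau : ContDiff ℝ 1 (plateau h x y) :=
  contDiff_ramp.sub contDiff_ramp

lemma deriv_plateau : deriv (plateau h x y) = fun s => rampKernel h x s - rampKernel h y s :=
  funext fun s => ((hasDerivAt_ramp s).sub (hasDerivAt_ramp s)).deriv

lemma plateau_nonneg (hh : 0 ≤ h) (hxy : x ≤ y) (s : ℝ) : 0 ≤ plateau h x y s :=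
  sub_nonneg.2 <| smoothTransition.monotone <| div_le_div_of_nonneg_right (by linarith) hh

lemma plateau_le_one (s : ℝ) : plateau h x y s ≤ 1 := by
  have := smoothTransition.le_one ((s - x) / h)
  have := smoothTransition.nonneg ((s - y) / h)
  unfold plateau ramp
  linarith

lemma tsupport_plateau_subset (hh : 0 < h) (hxy : x ≤ y) :
    tsupport (plateau h x y) ⊆ Icc x (y + h) := by
  refine closure_minimal (Function.support_subset_iff'.2 fun s hs => ?_) isClosed_Icc
  rcases not_and_or.1 hs with hs | hs <;> rw [not_le] at hs
  · rw [plateau, ramp_eq_zero hh hs.le, ramp_eq_zero hh (by linarith), sub_zero]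
  · rw [plateau, ramp_eq_one hh (by linarith), ramp_eq_one hh hs.le, sub_self]

lemma hasCompactSupport_plateau (hh : 0 < h) (hxy : x ≤ y) : HasCompactSupport (plateau h x y) :=
  isCompact_Icc.of_isClosed_subset (isClosed_tsupport _) (tsupport_plateau_subset hh hxy)

lemma tendsto_plateau (hxy : x ≤ y) (s : ℝ) :
    Tendsto (fun h => plateau h x y s) (𝓝[>] 0) (𝓝 ((Ioc x y).indicator 1 s)) := by
  rw [← Ioi_sdiff_Ioi, indicator_sdiff (Ioi_subset_Ioi hxy), Pi.sub_apply]
  exact (tendsto_ramp x s).sub (tendsto_ramp y s)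

end Plateau

/-- `F' ≤ G` in the sense of distributions on `(a, b)`. -/
def DistribDerivLe (a b : ℝ) (F G : ℝ → ℝ) : Prop :=
  ∀ α : ℝ → ℝ, ContDiff ℝ 1 α → HasCompactSupport α → tsupport α ⊆ Ioo a b → (∀ x, 0 ≤ α x) →
    0 ≤ ∫ x in Ioo a b, (α x * G x + deriv α x * F x)

section Antitone

variable {a b : ℝ} {F G : ℝ → ℝ}

lemma tendsto_setIntegral_plateau_mul (hG : IntegrableOn G (Ioo a b)) {x y : ℝ} (hax : a ≤ x)
    (hxy : x ≤ y) (hyb : y < b) :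
    Tendsto (fun h => ∫ s in Ioo a b, plateau h x y s * G s) (𝓝[>] 0)
      (𝓝 (∫ s in x..y, G s)) := by
  have hlim : ∫ s in x..y, G s = ∫ s in Ioo a b, (Ioc x y).indicator 1 s * G s := by
    simp only [← indicator_mul_left, Pi.one_apply, one_mul]
    rw [setIntegral_indicator measurableSet_Ioc,
      inter_eq_right.2 (Ioc_subset_Ioo hax hyb),
      intervalIntegral.integral_of_le hxy]
  rw [hlim]
  refine tendsto_integral_filter_of_dominated_convergence (fun s => ‖G s‖) ?_ ?_ hG.norm ?_
  · exact Eventually.of_forall fun h =>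
      (contDiff_plateau.continuous.aestronglyMeasurable).mul hG.aestronglyMeasurable
  · filter_upwards [self_mem_nhdsWithin] with h (hh : 0 < h)
    refine Eventually.of_forall fun s => ?_
    rw [norm_mul, Real.norm_eq_abs, abs_of_nonneg (plateau_nonneg hh.le hxy s)]
    exact mul_le_of_le_one_left (norm_nonneg _) (plateau_le_one s)
  · exact Eventually.of_forall fun s => (tendsto_plateau hxy s).mul_const _

namespace DistribDerivLe

lemma le_add_integral (hFG : DistribDerivLe a b F G) (hF : IntegrableOn F (Ioo a b))
    (hG : IntegrableOn G (Ioo a b)) {x y : ℝ} (hax : a < x) (hxy : x ≤ y) (hyb : y < b)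
    (hFx : Tendsto (fun h => ∫ s in Ioo a b, rampKernel h x s * F s) (𝓝[>] 0) (𝓝 (F x)))
    (hFy : Tendsto (fun h => ∫ s in Ioo a b, rampKernel h y s * F s) (𝓝[>] 0) (𝓝 (F y))) :
    F y ≤ F x + ∫ s in x..y, G s := by
  obtain ⟨M, hM⟩ := exists_abs_rampKernel_le
  have hkerF : ∀ h, 0 < h → ∀ z, IntegrableOn (fun s => rampKernel h z s * F s) (Ioo a b) :=
    fun h hh z => hF.bdd_mul (continuous_rampKernel h z).aestronglyMeasurable
      (Eventually.of_forall (hM h hh z))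
  have hpos : ∀ᶠ h in 𝓝[>] 0, 0 ≤ (∫ s in Ioo a b, plateau h x y s * G s) +
      ((∫ s in Ioo a b, rampKernel h x s * F s) - ∫ s in Ioo a b, rampKernel h y s * F s) := by
    filter_upwards [Ioo_mem_nhdsGT (sub_pos.2 hyb)] with h hh
    have htest := hFG (plateau h x y) contDiff_plateau (hasCompactSupport_plateau hh.1 hxy)
      ((tsupport_plateau_subset hh.1 hxy).trans (Icc_subset_Ioo hax (by linarith [hh.2])))
      (plateau_nonneg hh.1.le hxy)
    have hplG : IntegrableOn (fun s => plateau h x y s * G s) (Ioo a b) :=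
      hG.bdd_mul contDiff_plateau.continuous.aestronglyMeasurable (Eventually.of_forall fun s => by
        rw [Real.norm_eq_abs, abs_le]
        exact ⟨by linarith [plateau_nonneg hh.1.le hxy s], plateau_le_one s⟩)
    simp only [deriv_plateau, sub_mul] at htest
    rw [integral_add hplG, integral_sub (hkerF h hh.1 x) (hkerF h hh.1 y)] at htest
    · exact htest
    · exact (hkerF h hh.1 x).sub (hkerF h hh.1 y)
  have hlim := (tendsto_setIntegral_plateau_mul hG hax.le hxy hyb).add (hFx.sub hFy)
  linarith [ge_of_tendsto hlim hpos]

theorem exists_antitoneOn_sub_primitive (hFG : DistribDerivLe a b F G)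
    (hF : IntegrableOn F (Ioo a b)) (hG : IntegrableOn G (Ioo a b)) :
    ∃ L ⊆ Ioo a b, volume (Ioo a b \ L) = 0 ∧
      AntitoneOn (fun x => F x - ∫ s in a..x, G s) L := by
  set L := {z ∈ Ioo a b |
    Tendsto (fun h => ∫ s in Ioo a b, rampKernel h z s * F s) (𝓝[>] 0) (𝓝 (F z))}
  refine ⟨L, sep_subset _ _, ?_, fun x hx y hy hxy => ?_⟩
  · have hae := ae_tendsto_integral_rampKernel_mul
      (hF.integrable_indicator measurableSet_Ioo).locallyIntegrable
    refine measure_mono_null (fun z hz => ?_) (ae_iff.1 hae)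
    simp only [mem_ofPred_eq, indicator_of_mem hz.1, ← indicator_mul_right,
      integral_indicator measurableSet_Ioo]
    exact fun hz' => hz.2 ⟨hz.1, hz'⟩
  · have hint : ∀ z ∈ Ioo a b, IntervalIntegrable G volume a z := fun z hz =>
      (intervalIntegrable_iff_integrableOn_Ioc_of_le hz.1.le).2
        (hG.mono_set (Ioc_subset_Ioo_right hz.2))
    have hle := le_add_integral hFG hF hG hx.1.1 hxy hy.1.2 hx.2 hy.2
    have hW := intervalIntegral.integral_interval_sub_left (hint y hy.1) (hint x hx.1)
    linarith

end DistribDerivLe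

end Antitone

section Limits

lemma AntitoneOn.tendsto_nhdsWithin_csSup {α β : Type*} [LinearOrder α] [TopologicalSpace α]
    [OrderTopology α] [ConditionallyCompleteLinearOrder β] [TopologicalSpace β] [OrderTopology β]
    {f : α → β} {L : Set α} {x : α} (hf : AntitoneOn f L) (hL : L ⊆ Ioi x)
    (hbdd : BddAbove (f '' L)) : Tendsto f (𝓝[L] x) (𝓝 (sSup (f '' L))) := by
  rcases L.eq_empty_or_nonempty with rfl | hne
  · simp
  refine tendsto_order.2 ⟨fun c hc => ?_, fun c hc => ?_⟩
  · obtain ⟨_, ⟨z, hz, rfl⟩, hcz⟩ := exists_lt_of_lt_csSup (hne.image f) hc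
    filter_upwards [inter_mem_nhdsWithin L (Iio_mem_nhds (hL hz)), self_mem_nhdsWithin]
      with w hw hwL
    exact hcz.trans_le (hf hwL hz hw.2.le)
  · filter_upwards [self_mem_nhdsWithin] with w hw
    exact (le_csSup hbdd (mem_image_of_mem f hw)).trans_lt hc

lemma AntitoneOn.tendsto_nhdsWithin_csInf {α β : Type*} [LinearOrder α] [TopologicalSpace α]
    [OrderTopology α] [ConditionallyCompleteLinearOrder β] [TopologicalSpace β] [OrderTopology β]
    {f : α → β} {L : Set α} {x : α} (hf : AntitoneOn f L) (hL : L ⊆ Iio x)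
    (hbdd : BddBelow (f '' L)) : Tendsto f (𝓝[L] x) (𝓝 (sInf (f '' L))) :=
  AntitoneOn.tendsto_nhdsWithin_csSup (α := αᵒᵈ) (β := βᵒᵈ) hf.dual hL hbdd

lemma essLimWithin_of_tendsto_nhdsWithin {f : ℝ → ℝ} {S L E : Set ℝ} {x₀ l : ℝ}
    (hE : volume E = 0) (hL : ∀ᶠ x in 𝓝 x₀, x ∈ S \ E → x ∈ L)
    (hf : Tendsto f (𝓝[L] x₀) (𝓝 l)) : essLimWithin f S x₀ l :=
  ⟨E, hE, fun _ hxS hx => hf.comp <| tendsto_nhdsWithin_iff.2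
    ⟨hx, (hx.eventually hL).mono fun n hn => hn (hxS n)⟩⟩

theorem exists_essLimWithin_of_antitoneOn_sub_primitive {a b : ℝ} {F G : ℝ → ℝ} {L : Set ℝ}
    (hab : a < b) (hL : L ⊆ Ioo a b) (hnull : volume (Ioo a b \ L) = 0)
    (hF : ∃ C, ∀ x ∈ L, |F x| ≤ C) (hG : IntegrableOn G (Ioo a b))
    (hmono : AntitoneOn (fun x => F x - ∫ s in a..x, G s) L) :
    (∃ l, essLimWithin F (Ioi a) a l) ∧ (∃ l, essLimWithin F (Iio b) b l) := by
  set W := fun x => ∫ s in a..x, G s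
  have hWcont : ContinuousOn W (Icc a b) := by
    have hG' : IntegrableOn G (uIcc a b) := by
      rwa [uIcc_of_le hab.le, integrableOn_Icc_iff_integrableOn_Ioo]
    simpa only [uIcc_of_le hab.le] using intervalIntegral.continuousOn_primitive_interval hG'
  obtain ⟨CW, hCW⟩ := isCompact_Icc.exists_bound_of_continuousOn hWcont
  obtain ⟨CF, hCF⟩ := hF
  have hbound : ∀ y ∈ (fun x => F x - W x) '' L, |y| ≤ CF + CW := by
    rintro _ ⟨x, hx, rfl⟩
    have hWx := hCW x (Ioo_subset_Icc_self (hL hx))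
    rw [Real.norm_eq_abs] at hWx
    linarith [abs_sub (F x) (W x), hCF x hx]
  have hF_tendsto : ∀ x₀ ∈ Icc a b, ∀ c, Tendsto (fun x => F x - W x) (𝓝[L] x₀) (𝓝 c) →
      Tendsto F (𝓝[L] x₀) (𝓝 (c + W x₀)) := fun x₀ hx₀ c hc =>
    (hc.add ((hWcont x₀ hx₀).mono (hL.trans Ioo_subset_Icc_self))).congr fun x => sub_add_cancel _ _
  constructor
  · refine ⟨_, essLimWithin_of_tendsto_nhdsWithin hnull ?_ (hF_tendsto a (left_mem_Icc.2 hab.le) _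
      (hmono.tendsto_nhdsWithin_csSup (hL.trans Ioo_subset_Ioi_self)
        ⟨CF + CW, fun y hy => (abs_le.1 (hbound y hy)).2⟩))⟩
    filter_upwards [Iio_mem_nhds hab] with x hxb hx
    by_contra hxL
    exact hx.2 ⟨⟨hx.1, hxb⟩, hxL⟩
  · refine ⟨_, essLimWithin_of_tendsto_nhdsWithin hnull ?_ (hF_tendsto b (right_mem_Icc.2 hab.le) _
      (hmono.tendsto_nhdsWithin_csInf (hL.trans Ioo_subset_Iio_self)
        ⟨-(CF + CW), fun y hy => (abs_le.1 (hbound y hy)).1⟩))⟩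
    filter_upwards [Ioi_mem_nhds hab] with x hxa hx
    by_contra hxL
    exact hx.2 ⟨⟨hxa, hx.1⟩, hxL⟩

end Limits

section EntropyFlux

lemma regularity_of_sgn_and_part {sg P : ℝ → ℝ} (h : (sg = sgnp ∧ P = pp) ∨ (sg = sgnm ∧ P = np)) :
    Measurable sg ∧ (∀ v, |sg v| ≤ 1) ∧ Continuous P ∧ ∀ v, |P v| ≤ |v| := by
  rcases h with ⟨rfl, rfl⟩ | ⟨rfl, rfl⟩
  · refine ⟨Measurable.ite measurableSet_Ioi measurable_const measurable_const,
      fun v => ?_, continuous_id.max continuous_const, fun v => ?_⟩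
    · unfold sgnp; split_ifs <;> norm_num
    · rw [pp, abs_of_nonneg (le_max_right _ _)]
      exact max_le (le_abs_self v) (abs_nonneg v)
  · refine ⟨Measurable.ite measurableSet_Iio measurable_const measurable_const,
      fun v => ?_, continuous_neg.max continuous_const, fun v => ?_⟩
    · unfold sgnm; split_ifs <;> norm_num
    · rw [np, abs_of_nonneg (le_max_right _ _)]
      exact max_le (neg_le_abs v) (abs_nonneg v)

variable {H sg : ℝ → ℝ} {C M k : ℝ}

lemma abs_flux_le (hsg : ∀ v, |sg v| ≤ 1) (hH : ∀ v, |H v| ≤ C) {β : ℝ → ℝ}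
    (hβ : ∀ t, ‖β t‖ ≤ M) (v t : ℝ) : |sg (v - k) * (H v - H k) * β t| ≤ 2 * C * M := by
  have hHv : |H v - H k| ≤ 2 * C := (abs_sub _ _).trans (by linarith [hH v, hH k])
  rw [abs_mul, abs_mul]
  calc |sg (v - k)| * |H v - H k| * |β t| ≤ 1 * (2 * C) * M :=
        mul_le_mul (mul_le_mul (hsg _) hHv (abs_nonneg _) zero_le_one) (hβ t) (abs_nonneg _)
          (by linarith [abs_nonneg (H k), hH k])
    _ = 2 * C * M := by ring

lemma abs_BTrace_le (hsg : ∀ v, |sg v| ≤ 1) (hH : ∀ v, |H v| ≤ C) {β : ℝ → ℝ}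
    (hβ : ∀ t, ‖β t‖ ≤ M) (T : ℝ) (u : ℝ → ℝ → ℝ) (ξ : ℝ) :
    |BTrace T H sg u k β ξ| ≤ 2 * C * M * volume.real (Ioo 0 T) := by
  rw [← Real.norm_eq_abs]
  exact norm_setIntegral_le_of_norm_le_const measure_Ioo_lt_top fun t _ => abs_flux_le hsg hH hβ _ t

variable {μ ν : Measure ℝ} {u : ℝ → ℝ → ℝ}

lemma integrable_flux [IsFiniteMeasure μ] [IsFiniteMeasure ν]
    (hu : AEStronglyMeasurable (fun q : ℝ × ℝ => u q.1 q.2) (μ.prod ν)) (hsg_meas : Measurable sg)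
    (hsg : ∀ v, |sg v| ≤ 1) (hH_cont : Continuous H) (hH : ∀ v, |H v| ≤ C) {β : ℝ → ℝ}
    (hβ_cont : Continuous β) (hβ : ∀ t, ‖β t‖ ≤ M) :
    Integrable (fun q : ℝ × ℝ => sg (u q.1 q.2 - k) * (H (u q.1 q.2) - H k) * β q.2)
      (μ.prod ν) := by
  refine Integrable.mono' (integrable_const (2 * C * M)) ?_
    (Eventually.of_forall fun q => abs_flux_le hsg hH hβ _ q.2)
  exact ((hsg_meas.comp_aemeasurable (hu.aemeasurable.sub_const k)).aestronglyMeasurable.mul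
    ((hH_cont.comp_aestronglyMeasurable hu).sub aestronglyMeasurable_const)).mul
    (hβ_cont.comp continuous_snd).aestronglyMeasurable

lemma integrable_entropy [IsFiniteMeasure μ] [IsFiniteMeasure ν] {P β' : ℝ → ℝ}
    (hu : Integrable (fun q : ℝ × ℝ => u q.1 q.2) (μ.prod ν))
    (hP_cont : Continuous P) (hP : ∀ v, |P v| ≤ |v|) (hβ'_cont : Continuous β')
    (hβ' : ∀ t, ‖β' t‖ ≤ M) :
    Integrable (fun q : ℝ × ℝ => P (u q.1 q.2 - k) * β' q.2) (μ.prod ν) := by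
  have hPu : Integrable (fun q : ℝ × ℝ => P (u q.1 q.2 - k)) (μ.prod ν) :=
    (hu.sub (integrable_const k)).mono
      (hP_cont.comp_aestronglyMeasurable (hu.aestronglyMeasurable.sub aestronglyMeasurable_const))
      (Eventually.of_forall fun q => hP _)
  exact hPu.mul_bdd (hβ'_cont.comp continuous_snd).aestronglyMeasurable
    (Eventually.of_forall fun q => hβ' q.2)

lemma integral_integral_swap_mul_add_mul {Y : Type*} [MeasurableSpace Y] {ν : Measure Y}
    [SFinite μ] [SFinite ν] {p q : ℝ × Y → ℝ}
    (hp : Integrable p (μ.prod ν)) (hq : Integrable q (μ.prod ν)) {φ ψ : ℝ → ℝ}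
    (hφ : Continuous φ) (hφc : HasCompactSupport φ) (hψ : Continuous ψ)
    (hψc : HasCompactSupport ψ) :
    ∫ t, ∫ x, (φ x * p (x, t) + ψ x * q (x, t)) ∂μ ∂ν =
      ∫ x, (φ x * ∫ t, p (x, t) ∂ν + ψ x * ∫ t, q (x, t) ∂ν) ∂μ := by
  obtain ⟨Cφ, hCφ⟩ := hφc.exists_bound_of_continuous hφ
  obtain ⟨Cψ, hCψ⟩ := hψc.exists_bound_of_continuous hψ
  have hφp : Integrable (fun z : ℝ × Y => φ z.1 * p z) (μ.prod ν) :=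
    hp.bdd_mul (hφ.measurable.comp measurable_fst).aestronglyMeasurable
      (Eventually.of_forall fun z => hCφ z.1)
  have hψq : Integrable (fun z : ℝ × Y => ψ z.1 * q z) (μ.prod ν) :=
    hq.bdd_mul (hψ.measurable.comp measurable_fst).aestronglyMeasurable
      (Eventually.of_forall fun z => hCψ z.1)
  rw [← integral_integral_swap (hφp.add hψq)]
  refine integral_congr_ae ?_
  filter_upwards [hp.prod_right_ae, hq.prod_right_ae] with x hpx hqx
  rw [integral_add (hpx.const_mul _) (hqx.const_mul _), integral_const_mul, integral_const_mul]

end EntropyFlux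

theorem stmt6_general (a b T : ℝ) (hab : a < b)
    (H : ℝ → ℝ) (hW : W1inf H) (k : ℝ)
    (u : ℝ → ℝ → ℝ)
    (hu : IntegrableOn (fun q : ℝ × ℝ => u q.1 q.2) (Ioo a b ×ˢ Ioo 0 T) volume)
    (sg P : ℝ → ℝ) (hsg : (sg = sgnp ∧ P = pp) ∨ (sg = sgnm ∧ P = np))
    (hineq : ∀ α β : ℝ → ℝ,
      ContDiff ℝ 1 α → HasCompactSupport α → tsupport α ⊆ Ioo a b → (∀ x, 0 ≤ α x) →
      ContDiff ℝ 1 β → HasCompactSupport β → tsupport β ⊆ Ioo 0 T → (∀ t, 0 ≤ β t) →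
      0 ≤ ∫ t in Ioo (0:ℝ) T, ∫ x in Ioo a b,
        (P (u x t - k) * α x * deriv β t
          + sg (u x t - k) * (H (u x t) - H k) * deriv α x * β t)) :
    ∀ β : ℝ → ℝ, ContDiff ℝ 1 β → HasCompactSupport β → tsupport β ⊆ Ioo 0 T →
      (∀ t, 0 ≤ β t) →
      (∃ l : ℝ, essLimWithin (BTrace T H sg u k β) (Ioi a) a l) ∧
      (∃ l : ℝ, essLimWithin (BTrace T H sg u k β) (Iio b) b l) := by
  intro β hβ hβc hβs hβ0
  obtain ⟨hsg_meas, hsg_le, hP_cont, hP_le⟩ := regularity_of_sgn_and_part hsg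
  obtain ⟨⟨C, hC⟩, _, hLip⟩ := hW
  obtain ⟨M, hM⟩ := hβc.exists_bound_of_continuous hβ.continuous
  obtain ⟨M', hM'⟩ := hβc.deriv.exists_bound_of_continuous (hβ.continuous_deriv le_rfl)
  have hu' : Integrable (fun q : ℝ × ℝ => u q.1 q.2)
      ((volume.restrict (Ioo a b)).prod (volume.restrict (Ioo 0 T))) := by
    rwa [Measure.prod_restrict, ← Measure.volume_eq_prod]
  have hflux := integrable_flux (k := k) hu'.aestronglyMeasurable hsg_meas hsg_le hLip.continuous
    hC hβ.continuous hM
  have hent := integrable_entropy (k := k) hu' hP_cont hP_le (hβ.continuous_deriv le_rfl) hM'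
  have hFG : DistribDerivLe a b (BTrace T H sg u k β)
      (fun x => ∫ t in Ioo 0 T, P (u x t - k) * deriv β t) := by
    intro α hα hαc hαs hα0
    convert hineq α β hα hαc hαs hα0 hβ hβc hβs hβ0 using 1
    refine (integral_integral_swap_mul_add_mul hent hflux hα.continuous hαc
      (hα.continuous_deriv le_rfl) hαc.deriv).symm.trans ?_
    congr 1 with t
    congr 1 with x
    ring
  obtain ⟨L, hLsub, hLnull, hmono⟩ :=
    hFG.exists_antitoneOn_sub_primitive hflux.integral_prod_left hent.integral_prod_left
  exact exists_essLimWithin_of_antitoneOn_sub_primitive hab hLsub hLnull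
    ⟨_, fun x _ => abs_BTrace_le hsg_le hC hM T u x⟩ hent.integral_prod_left hmono

/-- Remark 5.4: for an `L¹` function satisfying the one-sign entropy
inequality with separated test functions, the one-sided essential limits of the boundary
flux exist (and are finite) at both endpoints. -/
theorem stmt6 (a b T : ℝ) (hab : a < b) (hT : 0 < T)
    (H : ℝ → ℝ) (hW : W1inf H) (hH0 : H 0 = 0) (k : ℝ)
    (u : ℝ → ℝ → ℝ)
    (hu : IntegrableOn (fun q : ℝ × ℝ => u q.1 q.2) (Ioo a b ×ˢ Ioo 0 T) volume)
    (sg P : ℝ → ℝ) (hsg : (sg = sgnp ∧ P = pp) ∨ (sg = sgnm ∧ P = np))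
    (hineq : ∀ α β : ℝ → ℝ,
      ContDiff ℝ 1 α → HasCompactSupport α → tsupport α ⊆ Ioo a b → (∀ x, 0 ≤ α x) →
      ContDiff ℝ 1 β → HasCompactSupport β → tsupport β ⊆ Ioo 0 T → (∀ t, 0 ≤ β t) →
      0 ≤ ∫ t in Ioo (0:ℝ) T, ∫ x in Ioo a b,
        (P (u x t - k) * α x * deriv β t
          + sg (u x t - k) * (H (u x t) - H k) * deriv α x * β t)) :
    ∀ β : ℝ → ℝ, ContDiff ℝ 1 β → HasCompactSupport β → tsupport β ⊆ Ioo 0 T →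
      (∀ t, 0 ≤ β t) →
      (∃ l : ℝ, essLimWithin (BTrace T H sg u k β) (Ioi a) a l) ∧
      (∃ l : ℝ, essLimWithin (BTrace T H sg u k β) (Iio b) b l) :=
  stmt6_general a b T hab H hW k u hu sg P hsg hineq
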